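/- Let L be a finite distributive lattice, f and g join-endomorphisms of L, and h the greatest join-endomorphism below both f and g. Then for every join-irreducible element a of L, h(a) = f(a) ⊓ g(a). -/

import Mathlib

/-! In a finite distributive lattice every element is the join of the join-irreducibles below it,
and join-irreducibles are join-prime. Hence any function `φ` given on the join-irreducibles extends
to a join-endomorphism `x ↦ ⨆ {φ c | c join-irreducible, c ≤ x}`. Applied to `φ c = f c ⊓ g c`
this extension lies below `f` and `g` (which are monotone), hence below `h`, so
`f a ⊓ g a ≤ h a` for join-irreducible `a`; the reverse inequality holds since `h ≤ f, g`. -/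

def IsJoinEndo {L : Type*} [Lattice L] [OrderBot L] (f : L → L) : Prop :=
  f ⊥ = ⊥ ∧ ∀ a b, f (a ⊔ b) = f a ⊔ f b

theorem IsJoinEndo.monotone {L : Type*} [Lattice L] [OrderBot L] {f : L → L}
    (hf : IsJoinEndo f) : Monotone f := fun a b hab => by
  simpa only [sup_eq_right.mpr hab] using (le_sup_left : f a ≤ f a ⊔ f b).trans (hf.2 a b).ge

section SupIrredExtend

variable {L M : Type*} [SemilatticeSup L] [Fintype L] [SemilatticeSup M] [OrderBot M]

open Classical in
noncomputable def supIrredExtend (φ : L → M) (x : L) : M :=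
  (Finset.univ.filter fun c => SupIrred c ∧ c ≤ x).sup φ

theorem supIrredExtend_le_iff {φ : L → M} {x : L} {y : M} :
    supIrredExtend φ x ≤ y ↔ ∀ c, SupIrred c → c ≤ x → φ c ≤ y := by
  classical
  simp only [supIrredExtend, Finset.sup_le_iff, Finset.mem_filter, Finset.mem_univ, true_and,
    and_imp]

theorem le_supIrredExtend {φ : L → M} {x c : L} (hc : SupIrred c) (hcx : c ≤ x) :
    φ c ≤ supIrredExtend φ x :=
  supIrredExtend_le_iff.mp le_rfl c hc hcx

theorem supIrredExtend_bot [OrderBot L] (φ : L → M) : supIrredExtend φ ⊥ = ⊥ :=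
  le_bot_iff.mp <| supIrredExtend_le_iff.mpr fun _ hc hc0 => absurd (le_bot_iff.mp hc0) hc.ne_bot

theorem supIrredExtend_mono (φ : L → M) : Monotone (supIrredExtend φ) := fun _ _ hxy =>
  supIrredExtend_le_iff.mpr fun _ hc hcx => le_supIrredExtend hc (hcx.trans hxy)

theorem supIrredExtend_le_of_monotone {φ f : L → M} (hf : Monotone f)
    (hφf : ∀ c, SupIrred c → φ c ≤ f c) (x : L) : supIrredExtend φ x ≤ f x :=
  supIrredExtend_le_iff.mpr fun c hc hcx => (hφf c hc).trans (hf hcx)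

end SupIrredExtend

theorem supIrredExtend_sup {L M : Type*} [DistribLattice L] [OrderBot L] [Fintype L]
    [SemilatticeSup M] [OrderBot M] (φ : L → M) (a b : L) :
    supIrredExtend φ (a ⊔ b) = supIrredExtend φ a ⊔ supIrredExtend φ b := by
  refine le_antisymm (supIrredExtend_le_iff.mpr fun c hc hcab => ?_)
    (sup_le (supIrredExtend_mono φ le_sup_left) (supIrredExtend_mono φ le_sup_right))
  rcases (supPrime_iff_supIrred.mpr hc).le_sup.mp hcab with hca | hcb
  · exact le_sup_of_le_left (le_supIrredExtend hc hca)
  · exact le_sup_of_le_right (le_supIrredExtend hc hcb)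

theorem isJoinEndo_supIrredExtend {L : Type*} [DistribLattice L] [OrderBot L] [Fintype L]
    (φ : L → L) : IsJoinEndo (supIrredExtend φ) :=
  ⟨supIrredExtend_bot φ, supIrredExtend_sup φ⟩

theorem meet_on_join_irreducibles {L : Type*} [DistribLattice L] [OrderBot L] [Fintype L]
    (f g : L → L) (hf : IsJoinEndo f) (hg : IsJoinEndo g)
    (h : L → L)
    (hh : IsJoinEndo h ∧ h ≤ f ∧ h ≤ g ∧
      ∀ h' : L → L, IsJoinEndo h' → h' ≤ f → h' ≤ g → h' ≤ h) :
    ∀ a : L, SupIrred a → h a = f a ⊓ g a := by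
  obtain ⟨-, hhf, hhg, hmax⟩ := hh
  set k := supIrredExtend fun c => f c ⊓ g c
  have hkf : k ≤ f := supIrredExtend_le_of_monotone hf.monotone fun _ _ => inf_le_left
  have hkg : k ≤ g := supIrredExtend_le_of_monotone hg.monotone fun _ _ => inf_le_right
  have hkh : k ≤ h := hmax k (isJoinEndo_supIrredExtend _) hkf hkg
  intro a ha
  exact le_antisymm (le_inf (hhf a) (hhg a)) ((le_supIrredExtend ha le_rfl).trans (hkh a))
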